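/- arXiv:2504.02410 — 4 statements merged into one kernel-verified Lean document; each statement's English description precedes it below -/
import Mathlib

section
/- Let λ be a partition and k ≥ 1 an integer. For every integer n ≥ |λ| + λ₁ the following exact identity holds: Σ_{i=0}^{k} (−1)^i · binom(k,i) · n^{−i} · p_{k+i}(λ[n]) = q_k(λ) + q₁(λ)^k + Σ_{i=1}^{k} (−1)^i · binom(k,i) · n^{−i} · ( q_{k+i}(λ) + q₁(λ)^{k+i} ). In particular, the left-hand side equals q_k(λ) + q₁(λ)^k plus a linear combination of q_{k+1}(λ),…,q_{2k}(λ) and q₁(λ)^{k+1},…,q₁(λ)^{2k} whose coefficients are of order O(n^{−1}), uniformly in λ. -/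
/-!
Prepending the part `n - |λ|` changes `p_m` only through its new first row, and every later row
`i + 1` of `λ[n]` contributes to `p_m` exactly what row `i` of `λ` contributes to `q_m`. Hence
`p_m(λ[n]) = (n - |λ|)^m + q_m(λ)` for `m ≥ 1`. By the binomial theorem,
`Σᵢ (-1)^i C(k,i) n^{-i} x^{k+i} = (x (n - x) / n)^k`, which is symmetric under `x ↦ n - x`, so the
contributions of the first row may be replaced by the same expression in `|λ| = q₁(λ)`.
-/

/-- The number of boxes `|λ|` of a partition, given as a function `ℕ → ℕ`
(0-indexed: `l i` is the part `λ_{i+1}`). -/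
noncomputable def psize (l : ℕ → ℕ) : ℕ := ∑' i, l i

/-- `q_k(λ) = Σ_{i ≥ 1} ((λ_i − i)^k − (−i)^k)` (0-indexed function `l`). -/
noncomputable def qq (l : ℕ → ℕ) (k : ℕ) : ℝ :=
  ∑' i : ℕ, (((l i : ℝ) - ((i : ℝ) + 1)) ^ k - (-((i : ℝ) + 1)) ^ k)

/-- `p_k(λ) = Σ_{i ≥ 1} ((λ_i − (i−1))^k − (−(i−1))^k)` (0-indexed function `l`). -/
noncomputable def pp (l : ℕ → ℕ) (k : ℕ) : ℝ :=
  ∑' i : ℕ, (((l i : ℝ) - (i : ℝ)) ^ k - (-(i : ℝ)) ^ k)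

/-- The partition `λ[n] = (n − |λ|, λ₁, λ₂, …)`. -/
noncomputable def prepend (l : ℕ → ℕ) (n : ℕ) : ℕ → ℕ :=
  fun i => Nat.casesOn i (n - psize l) l

open Finset

section FiniteSupport

variable {l : ℕ → ℕ} {N : ℕ}

lemma psize_eq_sum_range (hN : ∀ i ≥ N, l i = 0) : psize l = ∑ i ∈ range N, l i :=
  tsum_eq_sum fun i hi => hN i (by simpa using hi)

lemma qq_eq_sum_range (hN : ∀ i ≥ N, l i = 0) (m : ℕ) :
    qq l m = ∑ i ∈ range N, (((l i : ℝ) - ((i : ℝ) + 1)) ^ m - (-((i : ℝ) + 1)) ^ m) :=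
  tsum_eq_sum fun i hi => by simp [hN i (by simpa using hi)]

lemma qq_one_eq_psize (hN : ∀ i ≥ N, l i = 0) : qq l 1 = psize l := by
  rw [qq_eq_sum_range hN, psize_eq_sum_range hN]
  push_cast
  exact sum_congr rfl fun i _ => by ring

lemma pp_prepend (hN : ∀ i ≥ N, l i = 0) {n m : ℕ} (hm : m ≠ 0) (hle : psize l ≤ n) :
    pp (prepend l n) m = ((n : ℝ) - psize l) ^ m + qq l m := by
  have hN' : ∀ i ≥ N + 1, prepend l n i = 0 := fun
    | 0, h => by omega
    | i + 1, h => hN i (by omega)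
  rw [pp, tsum_eq_sum (s := range (N + 1)) fun i hi => by simp [hN' i (by simpa using hi)],
    sum_range_succ', qq_eq_sum_range hN, add_comm]
  congr 1
  · simp [prepend, Nat.cast_sub hle, zero_pow hm]
  · exact sum_congr rfl fun i _ => by simp [prepend]

end FiniteSupport

lemma sum_range_alternating_choose_mul_pow (k : ℕ) {a : ℝ} (ha : a ≠ 0) (x : ℝ) :
    ∑ i ∈ range (k + 1), (-1 : ℝ) ^ i * (k.choose i : ℝ) * (a ^ i)⁻¹ * x ^ (k + i)
      = (x * (a - x) / a) ^ k := by
  have h : x * (a - x) / a = x * (-(x / a) + 1) := by field_simp; ring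
  rw [h, mul_pow, add_pow, mul_sum]
  exact sum_congr rfl fun i _ => by rw [neg_pow (x / a), div_pow, one_pow, pow_add]; ring

lemma sum_range_alternating_choose_mul_sub_pow (k : ℕ) {a : ℝ} (ha : a ≠ 0) (x : ℝ) :
    ∑ i ∈ range (k + 1), (-1 : ℝ) ^ i * (k.choose i : ℝ) * (a ^ i)⁻¹ * (a - x) ^ (k + i)
      = ∑ i ∈ range (k + 1), (-1 : ℝ) ^ i * (k.choose i : ℝ) * (a ^ i)⁻¹ * x ^ (k + i) := by
  rw [sum_range_alternating_choose_mul_pow k ha, sum_range_alternating_choose_mul_pow k ha,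
    sub_sub_cancel, mul_comm]

theorem stmt0_general (l : ℕ → ℕ) (hfin : ∃ N, ∀ i ≥ N, l i = 0)
    (k : ℕ) (hk : 1 ≤ k) (n : ℕ) (hn : psize l + l 0 ≤ n) :
    ∑ i ∈ Finset.range (k + 1),
        (-1 : ℝ) ^ i * (k.choose i : ℝ) * ((n : ℝ) ^ i)⁻¹ * pp (prepend l n) (k + i)
      = qq l k + (qq l 1) ^ k
        + ∑ i ∈ Finset.Icc 1 k,
            (-1 : ℝ) ^ i * (k.choose i : ℝ) * ((n : ℝ) ^ i)⁻¹ *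
              (qq l (k + i) + (qq l 1) ^ (k + i)) := by
  obtain ⟨N, hN⟩ := hfin
  have hle : psize l ≤ n := by omega
  have first_row : ∑ i ∈ range (k + 1),
      (-1 : ℝ) ^ i * (k.choose i : ℝ) * ((n : ℝ) ^ i)⁻¹ * ((n : ℝ) - psize l) ^ (k + i)
      = ∑ i ∈ range (k + 1),
      (-1 : ℝ) ^ i * (k.choose i : ℝ) * ((n : ℝ) ^ i)⁻¹ * (psize l : ℝ) ^ (k + i) := by
    rcases eq_or_ne n 0 with rfl | hn0
    · simp [Nat.le_zero.mp hle]
    · exact sum_range_alternating_choose_mul_sub_pow k (by exact_mod_cast hn0) _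
  have rows (i : ℕ) : pp (prepend l n) (k + i) = ((n : ℝ) - psize l) ^ (k + i) + qq l (k + i) :=
    pp_prepend hN (by omega) hle
  rw [sum_congr rfl fun i _ => by rw [rows, mul_add], sum_add_distrib, first_row,
    ← sum_add_distrib, qq_one_eq_psize hN, range_eq_Ico, sum_eq_sum_Ico_succ_bot (by omega),
    Ico_add_one_right_eq_Icc, add_comm (qq l k)]
  congr 1
  · simp
  · exact sum_congr rfl fun i _ => by ring

theorem stmt0 (l : ℕ → ℕ) (hanti : Antitone l) (hfin : ∃ N, ∀ i ≥ N, l i = 0)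
    (k : ℕ) (hk : 1 ≤ k) (n : ℕ) (hn : psize l + l 0 ≤ n) :
    ∑ i ∈ Finset.range (k + 1),
        (-1 : ℝ) ^ i * (k.choose i : ℝ) * ((n : ℝ) ^ i)⁻¹ * pp (prepend l n) (k + i)
      = qq l k + (qq l 1) ^ k
        + ∑ i ∈ Finset.Icc 1 k,
            (-1 : ℝ) ^ i * (k.choose i : ℝ) * ((n : ℝ) ^ i)⁻¹ *
              (qq l (k + i) + (qq l 1) ^ (k + i)) :=
  stmt0_general l hfin k hk n hn
end

section
/- Let λ be a partition and let n be an integer with n ≥ |λ| + λ₁. Then for every partition μ with μ ≺ λ, the sequence μ[n] := (n − |μ|, μ₁, μ₂, …) is a partition of n satisfying μ[n] ≻ λ, and the map μ ↦ μ[n] is a bijection from the set {μ : μ ≺ λ} onto the set X_n(λ) := {ν : |ν| = n and ν ≻ λ}. Consequently, the cardinality of X_n(λ) is finite and does not depend on n (for n ≥ |λ| + λ₁). -/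
/-- A partition, encoded as a weakly decreasing finitely supported function `ℕ → ℕ`
(0-indexed: `l i` is the part `λ_{i+1}`). -/
def IsPartitionFun (l : ℕ → ℕ) : Prop := Antitone l ∧ ∃ N, ∀ i ≥ N, l i = 0

/-- `Interlaces m l` means `m ≻ l`, i.e. `m₁ ≥ l₁ ≥ m₂ ≥ l₂ ≥ ⋯`
(0-indexed: `m i ≥ l i` and `l i ≥ m (i+1)`). -/
def Interlaces (m l : ℕ → ℕ) : Prop := (∀ i, l i ≤ m i) ∧ (∀ i, m (i + 1) ≤ l i)

/-- `X_n(λ) = {ν : |ν| = n, ν ≻ λ}`. -/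
noncomputable def Xset (l : ℕ → ℕ) (n : ℕ) : Set (ℕ → ℕ) :=
  {m | IsPartitionFun m ∧ psize m = n ∧ Interlaces m l}

/-!
Deleting the first part of `ν ≻ λ` leaves a partition `μ ≺ λ`, and `ν = μ[n]` because `|ν| = n`.
Conversely `μ[n]` is a partition with `μ[n] ≻ λ` as soon as its first part `n - |μ|` is at least
`λ₁`, which `n ≥ |λ| + λ₁ ≥ |μ| + λ₁` guarantees. The set `{μ : μ ≺ λ}` does not involve `n`
and is finite because `μ ≤ λ` pointwise.
-/

lemma summable_of_forall_ge_eq_zero {M : Type*} [AddCommMonoid M] [TopologicalSpace M]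
    {f : ℕ → M} {N : ℕ} (h : ∀ i ≥ N, f i = 0) : Summable f :=
  summable_of_ne_finset_zero (s := Finset.range N) fun i hi => h i (by simpa using hi)

lemma psize_eq_zero_add {f : ℕ → ℕ} (hf : Summable fun i => f (i + 1)) :
    psize f = f 0 + psize fun i => f (i + 1) :=
  tsum_eq_zero_add' hf

lemma psize_le_psize {m l : ℕ → ℕ} {N : ℕ} (hl : ∀ i ≥ N, l i = 0) (hle : ∀ i, m i ≤ l i) :
    psize m ≤ psize l :=
  (summable_of_forall_ge_eq_zero fun i hi => Nat.le_zero.mp (hl i hi ▸ hle i)).tsum_le_tsum hle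
    (summable_of_forall_ge_eq_zero hl)

lemma finite_setOf_forall_le {l : ℕ → ℕ} {N : ℕ} (hl : ∀ i ≥ N, l i = 0) :
    {m : ℕ → ℕ | ∀ i, m i ≤ l i}.Finite := by
  have hzero {m : ℕ → ℕ} (hm : ∀ i, m i ≤ l i) (i : ℕ) (hi : N ≤ i) : m i = 0 :=
    Nat.le_zero.mp (hl i hi ▸ hm i)
  refine Set.Finite.of_finite_image (f := fun m (j : Fin N) => m j) ?_ fun m hm m' hm' h => ?_
  · refine (Set.Finite.pi fun j : Fin N => Set.finite_Iic (l j)).subset ?_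
    rintro _ ⟨m, hm, rfl⟩ j -
    exact hm j
  · funext i
    by_cases hi : i < N
    · exact congrFun h ⟨i, hi⟩
    · rw [hzero hm i (by omega), hzero hm' i (by omega)]

@[simp]
lemma prepend_zero (m : ℕ → ℕ) (n : ℕ) : prepend m n 0 = n - psize m := rfl

@[simp]
lemma prepend_succ (m : ℕ → ℕ) (n i : ℕ) : prepend m n (i + 1) = m i := rfl

lemma psize_prepend {m : ℕ → ℕ} {n N : ℕ} (hm : ∀ i ≥ N, m i = 0) (hn : psize m ≤ n) :
    psize (prepend m n) = n := by
  rw [psize_eq_zero_add (summable_of_forall_ge_eq_zero hm)]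
  change n - psize m + psize m = n
  omega

lemma IsPartitionFun.prepend {m : ℕ → ℕ} {n : ℕ} (hm : IsPartitionFun m)
    (hn : m 0 + psize m ≤ n) : IsPartitionFun (prepend m n) := by
  obtain ⟨hanti, N, hN⟩ := hm
  refine ⟨antitone_nat_of_succ_le fun i => ?_, N + 1, fun i hi => ?_⟩
  · cases i with
    | zero => simp only [prepend_succ, prepend_zero]; omega
    | succ i => exact hanti i.le_succ
  · obtain ⟨j, rfl⟩ : ∃ j, i = j + 1 := ⟨i - 1, by omega⟩
    exact hN j (by omega)

lemma Interlaces.prepend {l m : ℕ → ℕ} {n : ℕ} (h : Interlaces l m)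
    (hn : l 0 + psize m ≤ n) : Interlaces (prepend m n) l := by
  refine ⟨fun i => ?_, h.1⟩
  cases i with
  | zero => simp only [prepend_zero]; omega
  | succ i => exact h.2 i

lemma prepend_injective (n : ℕ) : Function.Injective fun m => prepend m n :=
  fun _ _ h => funext fun i => congrFun h (i + 1)

lemma prepend_tail {v : ℕ → ℕ} {n N : ℕ} (hv : ∀ i ≥ N, v i = 0) (hn : psize v = n) :
    prepend (fun i => v (i + 1)) n = v := by
  have hsplit := psize_eq_zero_add
    (summable_of_forall_ge_eq_zero (N := N) fun i hi => hv (i + 1) (by omega))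
  funext i
  cases i with
  | zero => simp only [prepend_zero]; omega
  | succ i => rfl

lemma prepend_mem_Xset {l m : ℕ → ℕ} {n N : ℕ} (hl : ∀ i ≥ N, l i = 0)
    (hn : psize l + l 0 ≤ n) (hm : IsPartitionFun m) (hlm : Interlaces l m) :
    prepend m n ∈ Xset l n := by
  have hsize : psize m ≤ psize l := psize_le_psize hl hlm.1
  have hm0 : m 0 ≤ l 0 := hlm.1 0
  obtain ⟨M, hM⟩ := hm.2
  exact ⟨hm.prepend (by omega), psize_prepend hM (by omega), hlm.prepend (by omega)⟩

lemma bijOn_prepend {l : ℕ → ℕ} {n N : ℕ} (hl : ∀ i ≥ N, l i = 0) (hn : psize l + l 0 ≤ n) :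
    Set.BijOn (fun m => prepend m n) {m | IsPartitionFun m ∧ Interlaces l m} (Xset l n) := by
  refine ⟨fun m hm => prepend_mem_Xset hl hn hm.1 hm.2, (prepend_injective n).injOn, ?_⟩
  rintro v ⟨⟨hanti, M, hM⟩, hsize, hvl⟩
  refine ⟨fun i => v (i + 1), ⟨?_, fun i => hvl.2 i, fun i => hvl.1 (i + 1)⟩, prepend_tail hM hsize⟩
  exact ⟨fun i j hij => hanti (by omega), M, fun i hi => hM (i + 1) (by omega)⟩

theorem stmt2 (l : ℕ → ℕ) (hl : IsPartitionFun l) (n : ℕ) (hn : psize l + l 0 ≤ n) :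
    (∀ m : ℕ → ℕ, IsPartitionFun m → Interlaces l m →
        IsPartitionFun (prepend m n) ∧ psize (prepend m n) = n ∧ Interlaces (prepend m n) l)
    ∧ Set.BijOn (fun m => prepend m n)
        {m | IsPartitionFun m ∧ Interlaces l m} (Xset l n)
    ∧ (Xset l n).Finite
    ∧ (∀ n' : ℕ, psize l + l 0 ≤ n' → (Xset l n').ncard = (Xset l n).ncard) := by
  obtain ⟨-, N, hN⟩ := hl
  have hfinite : {m | IsPartitionFun m ∧ Interlaces l m}.Finite :=
    (finite_setOf_forall_le hN).subset fun m hm => hm.2.1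
  refine ⟨fun m hm hlm => prepend_mem_Xset hN hn hm hlm, bijOn_prepend hN hn,
    (bijOn_prepend hN hn).finite_iff_finite.mp hfinite, fun n' hn' => ?_⟩
  rw [← (bijOn_prepend hN hn').ncard_eq, ← (bijOn_prepend hN hn).ncard_eq]
end

section
/- For every n ≥ 1, the submonoid of the multiplicative monoid of n×n integer matrices generated by the n×n permutation matrices together with the idempotents ε₁,…,ε_n equals Γ(n). -/
/-- `Γ(n)` (with integer entries): n×n matrices with entries in {0,1} such that
each row and each column contains at most one entry equal to 1. -/
def IsGammaMatrixZ {n : ℕ} (γ : Matrix (Fin n) (Fin n) ℤ) : Prop :=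
  (∀ i j, γ i j = 0 ∨ γ i j = 1) ∧
  (∀ i, {j | γ i j = 1}.Subsingleton) ∧
  (∀ j, {i | γ i j = 1}.Subsingleton)

/-!
The matrices in `Γ(n)` are exactly the matrices `f.toMatrix` of the partial bijections
`f : Fin n ≃. Fin n`, and `PEquiv.toMatrix` turns composition into matrix multiplication, so
`Γ(n)` is a monoid containing the generators. Conversely, a partial bijection `f` is the partial
identity on its domain followed by any permutation extending `f`; that permutation is a generator,
and the partial identity on a set `s` is the product of the `ε_a` for `a ∉ s`.
-/

open Classical in
theorem Set.Subsingleton.mem_dite_some_choose_iff {β : Type*} {P : β → Prop}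
    (hP : {b | P b}.Subsingleton) (b : β) :
    b ∈ (if h : ∃ b, P b then some h.choose else none) ↔ P b := by
  split_ifs with h
  · exact ⟨fun hb => Option.some_inj.mp hb ▸ h.choose_spec,
      fun hb => congrArg some (hP h.choose_spec hb)⟩
  · simpa using fun hb => h ⟨b, hb⟩

namespace PEquiv

variable {α β : Type*}

open Classical in
noncomputable def ofRel (r : α → β → Prop) (hr : ∀ a, {b | r a b}.Subsingleton)
    (hr' : ∀ b, {a | r a b}.Subsingleton) : α ≃. β where
  toFun a := if h : ∃ b, r a b then some h.choose else none
  invFun b := if h : ∃ a, r a b then some h.choose else none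
  inv a b := ((hr' b).mem_dite_some_choose_iff a).trans ((hr a).mem_dite_some_choose_iff b).symm

theorem mem_ofRel {r : α → β → Prop} (hr : ∀ a, {b | r a b}.Subsingleton)
    (hr' : ∀ b, {a | r a b}.Subsingleton) {a : α} {b : β} : b ∈ ofRel r hr hr' a ↔ r a b :=
  (hr a).mem_dite_some_choose_iff b

theorem ofSet_trans_ofSet (s t : Set α) [DecidablePred (· ∈ s)] [DecidablePred (· ∈ t)]
    [DecidablePred (· ∈ s ∩ t)] : (ofSet s).trans (ofSet t) = ofSet (s ∩ t) := by
  ext a b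
  simp only [trans_eq_some, ofSet_eq_some_iff, Set.mem_inter_iff]
  grind

theorem exists_ofSet_trans_toPEquiv [Finite α] (f : α ≃. α) :
    ∃ σ : Equiv.Perm α, (ofSet {a | (f a).isSome}).trans σ.toPEquiv = f := by
  have hf : Function.Injective fun a : {a // (f a).isSome} => (f a).get a.2 := by
    intro a a' h
    beta_reduce at h
    exact Subtype.ext (f.inj (Option.get_mem a.2) (h ▸ Option.get_mem a'.2))
  obtain ⟨σ, hσ⟩ := Equiv.Perm.exists_extending_pair _ _ Subtype.val_injective hf
  refine ⟨σ, ext fun a => ?_⟩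
  by_cases ha : (f a).isSome
  · rw [← Option.some_get ha, ← hσ ⟨a, ha⟩, trans_eq_some]
    exact ⟨a, ofSet_eq_some_iff.mpr ⟨rfl, ha⟩, rfl⟩
  · have hfa : f a = none := Option.not_isSome_iff_eq_none.mp ha
    rw [hfa, trans_eq_none]
    refine fun b _ => Or.inl fun hb => ha ?_
    obtain ⟨rfl, hmem⟩ := mem_ofSet_iff.mp hb
    exact hmem

theorem toMatrix_apply_eq_one_iff {R : Type*} [DecidableEq β] [Zero R] [One R] [NeZero (1 : R)]
    (f : α ≃. β) (a : α) (b : β) : f.toMatrix a b = (1 : R) ↔ b ∈ f a := by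
  rw [toMatrix_apply]
  split_ifs with h <;> simp [h]

variable {R : Type*} [Fintype α] [DecidableEq α] [Semiring R]

theorem toMatrix_ofSet_mem_closure {S : Set (Matrix α α R)}
    (hS : ∀ a, (ofSet {a}ᶜ).toMatrix ∈ S) (s : Set α) [DecidablePred (· ∈ s)] :
    (ofSet s).toMatrix ∈ Submonoid.closure S := by
  classical
  -- induction on the finite complement of `s`; removing `a` from `s` multiplies by `ε_a`
  suffices key : ∀ (T : Finset α) (s : Set α) [DecidablePred (· ∈ s)], sᶜ = T →
      (ofSet s).toMatrix ∈ Submonoid.closure S from key sᶜ.toFinset s (by simp)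
  intro T
  induction T using Finset.induction_on with
  | empty =>
    intro s _ hs
    rw [Finset.coe_empty, Set.compl_empty_iff] at hs
    rw [ofSet_eq_refl.mpr hs, toMatrix_refl]
    exact one_mem _
  | insert a T _ ih =>
    intro s _ hs
    obtain rfl : s = {a}ᶜ ∩ (↑T)ᶜ := by
      rw [← Set.compl_union, ← Set.insert_eq, ← Finset.coe_insert, ← hs, compl_compl]
    rw [← ofSet_trans_ofSet, toMatrix_trans]
    exact mul_mem (Submonoid.subset_closure (hS a)) (ih _ (compl_compl _))

end PEquiv

namespace Matrix

section

variable {α R : Type*} [DecidableEq α] [Zero R] [One R]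

theorem of_perm_eq_toMatrix_symm (π : Equiv.Perm α) :
    (of fun i j => if π j = i then (1 : R) else 0) = π.symm.toPEquiv.toMatrix := by
  ext i j
  simp [Equiv.symm_apply_eq, @eq_comm _ i]

theorem diagonal_ite_eq_toMatrix_ofSet_compl (a : α) :
    (diagonal fun j => if j = a then (0 : R) else 1) = (PEquiv.ofSet {a}ᶜ).toMatrix := by
  ext i j
  simp only [diagonal_apply, PEquiv.toMatrix_apply, PEquiv.mem_ofSet_iff,
    Set.mem_compl_singleton_iff]
  grind

end

variable (α R : Type*) [Fintype α] [DecidableEq α] [Semiring R]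

def partialPermSubmonoid : Submonoid (Matrix α α R) where
  carrier := Set.range PEquiv.toMatrix
  mul_mem' := by
    rintro _ _ ⟨f, rfl⟩ ⟨g, rfl⟩
    exact ⟨f.trans g, PEquiv.toMatrix_trans f g⟩
  one_mem' := ⟨PEquiv.refl α, PEquiv.toMatrix_refl⟩

theorem closure_perm_union_ofSet_compl_singleton :
    Submonoid.closure
        (Set.range (fun σ : Equiv.Perm α => (σ.toPEquiv.toMatrix : Matrix α α R)) ∪
          Set.range fun a => (PEquiv.ofSet {a}ᶜ).toMatrix) =
      partialPermSubmonoid α R := by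
  refine le_antisymm (Submonoid.closure_le.mpr ?_) ?_
  · rintro _ (⟨σ, rfl⟩ | ⟨a, rfl⟩) <;> exact ⟨_, rfl⟩
  · rintro _ ⟨f, rfl⟩
    obtain ⟨σ, hσ⟩ := f.exists_ofSet_trans_toPEquiv
    rw [← hσ, PEquiv.toMatrix_trans]
    exact mul_mem (PEquiv.toMatrix_ofSet_mem_closure (fun a => Or.inr ⟨a, rfl⟩) _)
      (Submonoid.subset_closure (Or.inl ⟨σ, rfl⟩))

end Matrix

theorem isGammaMatrixZ_toMatrix {n : ℕ} (f : Fin n ≃. Fin n) : IsGammaMatrixZ f.toMatrix := by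
  refine ⟨fun i j => ?_, fun i j hj j' hj' => ?_, fun j i hi i' hi' => ?_⟩
  · rw [PEquiv.toMatrix_apply]
    split_ifs <;> simp
  · exact Option.mem_unique ((f.toMatrix_apply_eq_one_iff i j).mp hj)
      ((f.toMatrix_apply_eq_one_iff i j').mp hj')
  · exact f.inj ((f.toMatrix_apply_eq_one_iff i j).mp hi)
      ((f.toMatrix_apply_eq_one_iff i' j).mp hi')

theorem isGammaMatrixZ_iff_mem_partialPermSubmonoid {n : ℕ} (γ : Matrix (Fin n) (Fin n) ℤ) :
    IsGammaMatrixZ γ ↔ γ ∈ Matrix.partialPermSubmonoid (Fin n) ℤ := by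
  refine ⟨fun ⟨h01, hrow, hcol⟩ => ⟨PEquiv.ofRel (γ · · = 1) hrow hcol, ?_⟩, ?_⟩
  · ext i j
    simp only [PEquiv.toMatrix_apply, PEquiv.mem_ofRel]
    rcases h01 i j with h | h <;> simp [h]
  · rintro ⟨f, rfl⟩
    exact isGammaMatrixZ_toMatrix f

theorem stmt5_general (n : ℕ) :
    (Submonoid.closure
        ({M | ∃ π : Equiv.Perm (Fin n),
            M = Matrix.of fun i j => if π j = i then (1 : ℤ) else 0} ∪
         {M | ∃ i : Fin n,
            M = Matrix.diagonal fun j => if j = i then (0 : ℤ) else 1}) :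
        Submonoid (Matrix (Fin n) (Fin n) ℤ)) =
      {γ : Matrix (Fin n) (Fin n) ℤ | IsGammaMatrixZ γ} := by
  have hperm : {M | ∃ π : Equiv.Perm (Fin n),
      M = Matrix.of fun i j => if π j = i then (1 : ℤ) else 0} =
      Set.range fun σ : Equiv.Perm (Fin n) => σ.toPEquiv.toMatrix := by
    simp only [Matrix.of_perm_eq_toMatrix_symm]
    ext M
    exact Equiv.symm_bijective.surjective.exists.trans (by simp [eq_comm])
  have heps : {M | ∃ i : Fin n, M = Matrix.diagonal fun j => if j = i then (0 : ℤ) else 1} =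
      Set.range fun a => (PEquiv.ofSet {a}ᶜ).toMatrix := by
    simp only [Matrix.diagonal_ite_eq_toMatrix_ofSet_compl]
    ext M
    simp [eq_comm]
  rw [hperm, heps, Matrix.closure_perm_union_ofSet_compl_singleton]
  ext γ
  exact (isGammaMatrixZ_iff_mem_partialPermSubmonoid γ).symm

/-- The submonoid of n×n integer matrices generated by the permutation matrices
together with the idempotents ε₁, …, ε_n equals `Γ(n)` (as a set of matrices). -/
theorem stmt5 (n : ℕ) (hn : 1 ≤ n) :
    (Submonoid.closure
        ({M | ∃ π : Equiv.Perm (Fin n),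
            M = Matrix.of fun i j => if π j = i then (1 : ℤ) else 0} ∪
         {M | ∃ i : Fin n,
            M = Matrix.diagonal fun j => if j = i then (0 : ℤ) else 1}) :
        Submonoid (Matrix (Fin n) (Fin n) ℤ)) =
      {γ : Matrix (Fin n) (Fin n) ℤ | IsGammaMatrixZ γ} :=
  stmt5_general n
end

section
/- Fix ℓ ≥ 1 and n ≥ 0, and let f ∈ H = ℓ²(X). Then U(g)f = f for every finitary permutation g of ℕ fixing each of the points 1,…,n if and only if f(ω) = 0 for every ω ∈ X whose range is not contained in {1,…,n}. (A permutation of ℕ is finitary if it moves only finitely many points.) -/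
/-!
If `f` is invariant and `ω` takes a value `x = ω a₀` outside `{1,…,n}`, then for every
`b > n` the transposition `(x b)` is finitary and fixes `{1,…,n}`, so `f` takes the value
`f ω` at each of the pairwise distinct points `(x b) ∘ ω` (they differ at `a₀`). A square
summable function has no infinite nonzero level set, hence `f ω = 0`. Conversely, a
permutation fixing `{1,…,n}` pointwise fixes every `ω` with range in `{1,…,n}` and maps the
other `ω` to points of the same kind, where `f` vanishes.
-/

open Filter Function

open scoped ENNReal

/-- `X`: the set of injective maps `ω : {1,…,ℓ} → ℕ` (where `ℕ = {1,2,3,…}`,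
modelled by `ℕ+`). -/
def Xinj (ℓ : ℕ) : Type := {ω : Fin ℓ → ℕ+ // Function.Injective ω}

theorem Memℓp.eq_zero_of_infinite_setOf_eq {α E : Type*} [NormedAddCommGroup E] {p : ℝ≥0∞}
    {f : α → E} (hf : Memℓp f p) (hp : p ≠ ∞) {c : E} (hc : {i | f i = c}.Infinite) :
    c = 0 := by
  rcases p.trichotomy with rfl | rfl | hp₀
  · by_contra hc₀
    exact hc ((memℓp_zero_iff.1 hf).subset fun i (hi : f i = c) => show f i ≠ 0 by rwa [hi])
  · exact absurd rfl hp
  · have h : ‖c‖ ^ p.toReal = 0 :=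
      tendsto_nhds_unique_of_frequently_eq tendsto_const_nhds
        (hf.summable hp₀).tendsto_cofinite_zero
        (frequently_cofinite_iff_infinite.2 (hc.mono fun i (hi : f i = c) => by simp [hi]))
    simpa using (Real.rpow_eq_zero (norm_nonneg c) hp₀.ne').1 h

theorem Equiv.finite_setOf_swap_apply_ne {β : Type*} [DecidableEq β] (x y : β) :
    {z | Equiv.swap x y z ≠ z}.Finite :=
  (Set.toFinite {x, y}).subset fun z hz => by
    by_contra h
    simp only [Set.mem_insert_iff, Set.mem_singleton_iff, not_or] at h
    exact hz (Equiv.swap_apply_of_ne_of_ne h.1 h.2)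

theorem Equiv.Perm.apply_mem_iff_of_forall_mem_apply_eq {β : Type*} {S : Set β}
    {g : Equiv.Perm β} (hg : ∀ x ∈ S, g x = x) (x : β) : g x ∈ S ↔ x ∈ S := by
  refine ⟨fun h => ?_, fun h => by rwa [hg x h]⟩
  rwa [← g.injective (hg _ h)]

section InjectiveMaps

variable {ι β E : Type*} [NormedAddCommGroup E] {S : Set β}

theorem eq_zero_of_forall_perm_invariant {p : ℝ≥0∞} (hS : Sᶜ.Infinite)
    {f : {ω : ι → β // Injective ω} → E} (hf : Memℓp f p) (hp : p ≠ ∞)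
    (hU : ∀ g : Equiv.Perm β, {x | g x ≠ x}.Finite → (∀ j ∈ S, g j = j) →
      ∀ ω, f ⟨⇑g⁻¹ ∘ ω.1, g⁻¹.injective.comp ω.2⟩ = f ω)
    {ω : {ω : ι → β // Injective ω}} (hω : ¬ ∀ a, ω.1 a ∈ S) : f ω = 0 := by
  classical
  obtain ⟨a₀, ha₀⟩ := not_forall.1 hω
  let Ω : β → {ω : ι → β // Injective ω} := fun b =>
    ⟨Equiv.swap (ω.1 a₀) b ∘ ω.1, (Equiv.swap _ _).injective.comp ω.2⟩
  have hΩ : Injective Ω := fun b b' h => by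
    simpa [Ω] using congrFun (congrArg Subtype.val h) a₀
  have hfΩ : ∀ b ∉ S, f (Ω b) = f ω := fun b hb => by
    have hfix : ∀ j ∈ S, Equiv.swap (ω.1 a₀) b j = j := fun j hj =>
      Equiv.swap_apply_of_ne_of_ne (ne_of_mem_of_not_mem hj ha₀) (ne_of_mem_of_not_mem hj hb)
    simpa [Equiv.swap_inv] using hU _ (Equiv.finite_setOf_swap_apply_ne _ _) hfix ω
  exact hf.eq_zero_of_infinite_setOf_eq hp
    ((hS.image hΩ.injOn).mono (Set.image_subset_iff.2 hfΩ))

theorem perm_invariant_of_forall_eq_zero {f : {ω : ι → β // Injective ω} → E}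
    (hf : ∀ ω : {ω : ι → β // Injective ω}, (¬ ∀ a, ω.1 a ∈ S) → f ω = 0)
    {g : Equiv.Perm β} (hg : ∀ j ∈ S, g j = j) (ω : {ω : ι → β // Injective ω}) :
    f ⟨⇑g⁻¹ ∘ ω.1, g⁻¹.injective.comp ω.2⟩ = f ω := by
  have hg' : ∀ j ∈ S, g⁻¹ j = j := fun j hj => Equiv.Perm.inv_eq_iff_eq.2 (hg j hj).symm
  by_cases hω : ∀ a, ω.1 a ∈ S
  · congr
    exact funext fun a => hg' _ (hω a)
  · rw [hf ω hω, hf]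
    simpa only [comp_apply, Equiv.Perm.apply_mem_iff_of_forall_mem_apply_eq hg'] using hω

end InjectiveMaps

theorem stmt16_general (ℓ : ℕ) (n : ℕ)
    (f : lp (fun _ : Xinj ℓ => ℂ) 2) :
    (∀ g : Equiv.Perm ℕ+,
        {x : ℕ+ | g x ≠ x}.Finite →
        (∀ j : ℕ+, (j : ℕ) ≤ n → g j = j) →
        -- `U(g) f = f`, where `(U(g)f)(ω) = f(g⁻¹ ∘ ω)`:
        ∀ ω : Xinj ℓ,
          f ⟨fun a => g⁻¹ (ω.1 a), (Equiv.injective g⁻¹).comp ω.2⟩ = f ω)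
      ↔
    (∀ ω : Xinj ℓ, ¬ (∀ a, ((ω.1 a : ℕ) ≤ n)) → f ω = 0) := by
  have hS : {j : ℕ+ | (j : ℕ) ≤ n}ᶜ.Infinite :=
    (Set.Ici_infinite n.succPNat).mono fun j (hj : n + 1 ≤ (j : ℕ)) => by
      simp only [Set.mem_compl_iff, Set.mem_ofPred_eq]; omega
  exact ⟨fun hU ω hω => eq_zero_of_forall_perm_invariant (ι := Fin ℓ) hS (lp.memℓp f)
      (by norm_num) hU hω,
    fun hf g _ hg =>
      perm_invariant_of_forall_eq_zero (ι := Fin ℓ) (S := {j : ℕ+ | (j : ℕ) ≤ n}) hf hg⟩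

theorem stmt16 (ℓ : ℕ) (hℓ : 1 ≤ ℓ) (n : ℕ)
    (f : lp (fun _ : Xinj ℓ => ℂ) 2) :
    (∀ g : Equiv.Perm ℕ+,
        {x : ℕ+ | g x ≠ x}.Finite →
        (∀ j : ℕ+, (j : ℕ) ≤ n → g j = j) →
        -- `U(g) f = f`, where `(U(g)f)(ω) = f(g⁻¹ ∘ ω)`:
        ∀ ω : Xinj ℓ,
          f ⟨fun a => g⁻¹ (ω.1 a), (Equiv.injective g⁻¹).comp ω.2⟩ = f ω)
      ↔
    (∀ ω : Xinj ℓ, ¬ (∀ a, ((ω.1 a : ℕ) ≤ n)) → f ω = 0) :=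
  stmt16_general ℓ n f
end
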